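/- Let G=(U,E) be a graph with edges e_1,...,e_m and let k ≥ 2. Construct candidates C = U ∪ {c,d} ∪ F where F = {f_1,...,f_{k-2}}; let M consist of one voter ranking {c,d} ∪ F in the bottom k positions, and let Q_i rank e_i ∪ F in the bottom k positions. Then under k-veto, for every subset Q' ⊆ {Q_1,...,Q_m}, candidate c is a co-winner of M ∘ Q' if and only if the edge set {e_i : Q_i ∈ Q'} is an edge cover of G. -/
import Mathlib


/-- Candidates for the k-veto construction: the vertices `V`, the two special candidates
`c = Sum.inr (Sum.inl 0)` and `d = Sum.inr (Sum.inl 1)`, and fillers `F` of size `k-2`. -/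
abbrev KVCand (V : Type) (k : ℕ) := V ⊕ (Fin 2 ⊕ Fin (k - 2))

/-- The `k` candidates placed in the bottom `k` positions by the registered voter of `M`:
`{c, d} ∪ F`. -/
def vetoM (V : Type) [DecidableEq V] (k : ℕ) : Finset (KVCand V k) :=
  {Sum.inr (Sum.inl 0), Sum.inr (Sum.inl 1)}
    ∪ Finset.univ.image (fun j : Fin (k - 2) => Sum.inr (Sum.inr j))

/-- The `k` candidates placed in the bottom `k` positions by voter `Q_i`: `e_i ∪ F`. -/
def vetoQ {V : Type} [DecidableEq V] {m : ℕ} (k : ℕ) (e : Fin m → Finset V) (i : Fin m) :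
    Finset (KVCand V k) :=
  (e i).image Sum.inl ∪ Finset.univ.image (fun j : Fin (k - 2) => Sum.inr (Sum.inr j))

/-- The number of voters of `M ∘ Q'` placing candidate `x` in the bottom `k` positions. -/
def botCount {V : Type} [DecidableEq V] {m : ℕ} (k : ℕ) (e : Fin m → Finset V)
    (Q' : Finset (Fin m)) (x : KVCand V k) : ℕ :=
  (if x ∈ vetoM V k then 1 else 0) + ∑ i ∈ Q', if x ∈ vetoQ k e i then 1 else 0

/-- In the k-veto construction (`k ≥ 2`), for every subset `Q'` of the unregistered voters,
`c` is a co-winner of `M ∘ Q'` (equivalently, its bottom-`k` count is minimal) iff the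
corresponding edge set is an edge cover of the graph. -/
theorem kveto_winner_iff_edgeCover (V : Type) [Fintype V] [DecidableEq V]
    (m k : ℕ) (hk : 2 ≤ k) (e : Fin m → Finset V) (he : ∀ i, (e i).card = 2)
    (hinj : Function.Injective e) (Q' : Finset (Fin m)) :
    (∀ x, botCount k e Q' (Sum.inr (Sum.inl 0)) ≤ botCount k e Q' x)
      ↔ ∀ v : V, 1 ≤ (Q'.filter (fun i => v ∈ e i)).card := by
  have hc : botCount k e Q' (Sum.inr (Sum.inl 0)) = 1 := by
    unfold botCount
    rw [if_pos (by simp [vetoM]),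
      Finset.sum_eq_zero (fun i _ => if_neg (by simp [vetoQ]))]
    rfl
  have hv : ∀ v : V, botCount k e Q' (Sum.inl v)
      = (Q'.filter (fun i => v ∈ e i)).card := by
    intro v
    unfold botCount
    rw [if_neg (by simp [vetoM]), Finset.card_filter]
    simp [vetoQ]
  rw [hc]
  constructor
  · intro h v
    have := h (Sum.inl v)
    rwa [hv v] at this
  · intro h x
    match x with
    | Sum.inl v => rw [hv v]; exact h v
    | Sum.inr (Sum.inl a) =>
        unfold botCount
        rw [if_pos]
        · exact Nat.le_add_right 1 _
        · fin_cases a <;> simp [vetoM]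
    | Sum.inr (Sum.inr j) =>
        unfold botCount
        rw [if_pos (by simp [vetoM])]
        exact Nat.le_add_right 1 _
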